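/- Let m : ℝⁿ → (0,∞) and suppose there exist constants C₀ ≥ 1 and d₀ > 0 such that m(y) ≤ C₀ (1 + |x-y| m(x))^{d₀} m(x) for all x, y ∈ ℝⁿ, and moreover m(y) is comparable to m(x) (with constant C₀) whenever |x-y| ≤ C₀/m(x). Then for all x, y ∈ ℝⁿ, m(y) ≥ m(x) / ( C₀' (1 + |x-y| m(x))^{d₀/(d₀+1)} ) for some constant C₀' depending only on C₀, d₀. -/

import Mathlib

/-!
Swapping the roles of `x` and `y` in the upper bound gives `m x / m y ≤ C₀ (1 + |x - y| m y)^d₀`.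
When `|x - y| m y ≤ 1` this ratio is at most `2^d₀ C₀`. Otherwise the ratio `s = m x / m y` and
`u = |x - y| m y` satisfy `s ≤ 2^d₀ C₀ u^d₀`; taking a `(d₀+1)`-th root and writing
`s = s^(1/(d₀+1)) s^(d₀/(d₀+1))` trades the power of `u` for a power of `u s = |x - y| m x`.
-/

open Real

theorem le_mul_mul_rpow_of_le_mul_rpow {s u K d : ℝ} (hs : 0 ≤ s) (hu : 0 ≤ u) (hK : 1 ≤ K)
    (hd : 0 ≤ d) (h : s ≤ K * u ^ d) : s ≤ K * (u * s) ^ (d / (d + 1)) := by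
  have hexp : 1 / (d + 1) + d / (d + 1) = 1 := by
    rw [← add_div, add_comm 1 d, div_self (by positivity)]
  have hroot : s ^ (1 / (d + 1)) ≤ K * u ^ (d / (d + 1)) :=
    calc s ^ (1 / (d + 1)) ≤ (K * u ^ d) ^ (1 / (d + 1)) := by gcongr
      _ = K ^ (1 / (d + 1)) * u ^ (d / (d + 1)) := by
        rw [mul_rpow (by positivity) (by positivity), ← rpow_mul hu, mul_one_div]
      _ ≤ K * u ^ (d / (d + 1)) := by
        gcongr
        exact rpow_le_self_of_one_le hK (by rw [div_le_one (by positivity)]; linarith)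
  calc s = s ^ (1 / (d + 1)) * s ^ (d / (d + 1)) := by
        rw [← rpow_add' hs (by rw [hexp]; norm_num), hexp, rpow_one]
    _ ≤ K * u ^ (d / (d + 1)) * s ^ (d / (d + 1)) := by gcongr
    _ = K * (u * s) ^ (d / (d + 1)) := by rw [mul_rpow hu hs]; ring

theorem le_two_rpow_mul_one_add_mul_rpow {s u K d : ℝ} (hs : 0 ≤ s) (hu : 0 ≤ u) (hK : 1 ≤ K)
    (hd : 0 ≤ d) (h : s ≤ K * (1 + u) ^ d) :
    s ≤ 2 ^ d * K * (1 + u * s) ^ (d / (d + 1)) := by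
  have hone : 1 ≤ (1 + u * s) ^ (d / (d + 1)) := one_le_rpow (by nlinarith) (by positivity)
  rcases le_total u 1 with hu1 | hu1
  · calc s ≤ K * (1 + u) ^ d := h
      _ ≤ K * 2 ^ d := by gcongr; linarith
      _ ≤ 2 ^ d * K * (1 + u * s) ^ (d / (d + 1)) := by
        rw [mul_comm K]; exact le_mul_of_one_le_right (by positivity) hone
  · have hpow : s ≤ 2 ^ d * K * u ^ d :=
      calc s ≤ K * (1 + u) ^ d := h
        _ ≤ K * (2 * u) ^ d := by gcongr; linarith
        _ = 2 ^ d * K * u ^ d := by rw [mul_rpow zero_le_two hu]; ring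
    have h2K : 1 ≤ 2 ^ d * K := one_le_mul_of_one_le_of_one_le (one_le_rpow one_le_two hd) hK
    calc s ≤ 2 ^ d * K * (u * s) ^ (d / (d + 1)) :=
          le_mul_mul_rpow_of_le_mul_rpow hs hu h2K hd hpow
      _ ≤ 2 ^ d * K * (1 + u * s) ^ (d / (d + 1)) := by gcongr; linarith

theorem aux_function_lower_bound_general {n : ℕ} (C₀ d₀ : ℝ) (hC₀ : 1 ≤ C₀) (hd₀ : 0 < d₀)
    (m : EuclideanSpace ℝ (Fin n) → ℝ) (hm : ∀ x, 0 < m x)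
    (hb : ∀ x y, m y ≤ C₀ * (1 + ‖x - y‖ * m x) ^ d₀ * m x) :
    ∃ C₀' : ℝ, 0 < C₀' ∧ ∀ x y,
      m x / (C₀' * (1 + ‖x - y‖ * m x) ^ (d₀ / (d₀ + 1))) ≤ m y := by
  refine ⟨2 ^ d₀ * C₀, by positivity, fun x y => ?_⟩
  have hx := hm x
  have hy := hm y
  have hratio : m x / m y ≤ C₀ * (1 + ‖x - y‖ * m y) ^ d₀ := by
    rw [div_le_iff₀ hy, norm_sub_rev]
    exact hb y x
  have hbound := le_two_rpow_mul_one_add_mul_rpow (div_nonneg hx.le hy.le)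
    (by positivity) hC₀ hd₀.le hratio
  rw [show ‖x - y‖ * m y * (m x / m y) = ‖x - y‖ * m x by field_simp] at hbound
  rw [div_le_iff₀ hy] at hbound
  exact div_le_of_le_mul₀ (by positivity) hy.le (by rwa [mul_comm (m y)])

theorem aux_function_lower_bound {n : ℕ} (C₀ d₀ : ℝ) (hC₀ : 1 ≤ C₀) (hd₀ : 0 < d₀)
    (m : EuclideanSpace ℝ (Fin n) → ℝ) (hm : ∀ x, 0 < m x)
    (hb : ∀ x y, m y ≤ C₀ * (1 + ‖x - y‖ * m x) ^ d₀ * m x)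
    (hcomp : ∀ x y, ‖x - y‖ ≤ C₀ / m x → m x ≤ C₀ * m y ∧ m y ≤ C₀ * m x) :
    ∃ C₀' : ℝ, 0 < C₀' ∧ ∀ x y,
      m x / (C₀' * (1 + ‖x - y‖ * m x) ^ (d₀ / (d₀ + 1))) ≤ m y :=
  aux_function_lower_bound_general C₀ d₀ hC₀ hd₀ m hm hb
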